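/- Let A and B be nondeterministic parity tree automata over alphabet Σ, t a Σ-tree, ρ_A and ρ_B accepting runs of A and B on t, where ρ_A is obtained from ρ_B by a guiding function g that preserves acceptance. If u ∈ {0,1}*, v ∈ {0,1}⁺ satisfy ρ_A(u) = ρ_A(u·v) and ρ_B(u) = ρ_B(u·v), and the greatest priority encountered between positions u and u·v in ρ_B is even, then the greatest priority encountered on that segment in ρ_A is also even. -/

import Mathlib

def InfOften (c : ℕ → ℕ) (v : ℕ) : Prop := ∀ n : ℕ, ∃ m, n ≤ m ∧ c m = v

def MaxInfRec (c : ℕ → ℕ) (v : ℕ) : Prop :=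
  InfOften c v ∧ ∀ w, InfOften c w → w ≤ v

def ParityAccepting (c : ℕ → ℕ) : Prop := ∃ v, MaxInfRec c v ∧ Even v

def pref (b : ℕ → Bool) (n : ℕ) : List Bool := List.ofFn (fun i : Fin n => b i)

/-- A nondeterministic parity tree automaton over the alphabet `A`, with
priorities (on the two child edges of each transition) in the index
`[pmin, pmax]`. -/
structure NPA (A : Type) where
  Q : Type
  fin : Fintype Q
  init : Q
  delta : Set (Q × A × Q × Q)
  prio : (Q × A × Q × Q) → Bool → ℕ
  pmin : ℕ
  pmax : ℕ
  prio_mem : ∀ d b, prio d b ∈ Finset.Icc pmin pmax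

attribute [instance] NPA.fin

/-- A run of the automaton `M` on the tree `t`, given as a transition-labeled
tree consistent with `t`. -/
def IsRun {A : Type} (M : NPA A) (t : List Bool → A)
    (ρ : List Bool → M.Q × A × M.Q × M.Q) : Prop :=
  (ρ []).1 = M.init ∧
  ∀ w : List Bool, ρ w ∈ M.delta ∧ (ρ w).2.1 = t w ∧
    ∀ dir : Bool, (ρ (w ++ [dir])).1 = (if dir then (ρ w).2.2.2 else (ρ w).2.2.1)

/-- The priority sequence of a run along the branch `b`. -/
def BranchPrio {A : Type} (M : NPA A) (ρ : List Bool → M.Q × A × M.Q × M.Q)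
    (b : ℕ → Bool) : ℕ → ℕ := fun n => M.prio (ρ (pref b n)) (b n)

/-- A run is accepting if the priority sequence of every branch is parity
accepting. -/
def AcceptingRun {A : Type} (M : NPA A) (ρ : List Bool → M.Q × A × M.Q × M.Q) : Prop :=
  ∀ b : ℕ → Bool, ParityAccepting (BranchPrio M ρ b)

/-- The language of the automaton `M`. -/
def Lang {A : Type} (M : NPA A) : Set (List Bool → A) :=
  {t | ∃ ρ, IsRun M t ρ ∧ AcceptingRun M ρ}

/-- `g` is a guiding function from `B` to `M`: it is compatible with the
given state and letter, and produces transitions of `M`. -/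
def GuidingCompat {A : Type} (M B : NPA A)
    (g : M.Q × (B.Q × A × B.Q × B.Q) → M.Q × A × M.Q × M.Q) : Prop :=
  ∀ p d, (g (p, d)).1 = p ∧ (g (p, d)).2.1 = d.2.1 ∧ g (p, d) ∈ M.delta

/-- `ρA` is the run guided by `ρB` via `g`. -/
def Guided {A : Type} {M B : NPA A}
    (g : M.Q × (B.Q × A × B.Q × B.Q) → M.Q × A × M.Q × M.Q)
    (ρB : List Bool → B.Q × A × B.Q × B.Q)
    (ρA : List Bool → M.Q × A × M.Q × M.Q) : Prop :=
  ∀ w : List Bool, ρA w = g ((ρA w).1, ρB w)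

/-- The guiding function `g` preserves acceptance. -/
def PreservesAcceptance {A : Type} (M B : NPA A)
    (g : M.Q × (B.Q × A × B.Q × B.Q) → M.Q × A × M.Q × M.Q) : Prop :=
  ∀ (t : List Bool → A) ρB ρA, IsRun B t ρB → AcceptingRun B ρB →
    IsRun M t ρA → Guided g ρB ρA → AcceptingRun M ρA

/-- `M` is guidable: every automaton with the same language admits an
acceptance-preserving guiding function to `M`. -/
def Guidable {A : Type} (M : NPA A) : Prop :=
  ∀ B : NPA A, Lang B = Lang M →
    ∃ g, GuidingCompat M B g ∧ PreservesAcceptance M B g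

/-! Pumping. Let `collapse u v` send each position to the one obtained by cutting out `v` after
`u` whenever the position `u ++ v` is reached. Since `ρ u = ρ (u ++ v)`, `ρ ∘ collapse u v` is a
run on the pumped tree `t ∘ collapse u v`. A branch of the pumped run of `B` either leaves the
loop from `u` to `u ++ v` for good, and then its priorities are a tail of those of a branch of
`ρB`, or it turns around the loop forever, and then its maximal recurring priority is the maximum
over the loop, even by hypothesis. So the pumped run of `B` is accepting, hence so is the pumped
run of `A` that it guides; along the branch `u v v v ⋯` the maximal recurring priority of the
latter is the maximum of `ρA` over the loop. -/

theorem pref_succ (b : ℕ → Bool) (n : ℕ) : pref b (n + 1) = pref b n ++ [b n] := by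
  rw [pref, List.ofFn_succ', List.concat_eq_append]
  rfl

def prependBranch (l : List Bool) (b : ℕ → Bool) (i : ℕ) : Bool :=
  if i < l.length then l.getD i false else b (i - l.length)

theorem prependBranch_length_add (l : List Bool) (b : ℕ → Bool) (j : ℕ) :
    prependBranch l b (l.length + j) = b j := by
  simp [prependBranch]

theorem pref_prependBranch (l : List Bool) (b : ℕ → Bool) (j : ℕ) :
    pref (prependBranch l b) (l.length + j) = l ++ pref b j := by
  induction j with
  | zero =>
    refine List.ext_getElem (by simp [pref]) fun i _ _ => ?_
    simp [pref, prependBranch]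
  | succ j ih =>
    rw [← Nat.add_assoc, pref_succ, ih, prependBranch_length_add, pref_succ, List.append_assoc]

theorem infOften_iff_of_shift {c c' : ℕ → ℕ} {k l : ℕ} (h : ∀ j, c (k + j) = c' (l + j))
    (x : ℕ) : InfOften c x ↔ InfOften c' x := by
  have key : ∀ {c c' : ℕ → ℕ} {k l : ℕ}, (∀ j, c (k + j) = c' (l + j)) →
      InfOften c' x → InfOften c x := by
    intro c c' k l h hx n
    obtain ⟨m, hm, hcm⟩ := hx (l + n)
    refine ⟨k + (m - l), by omega, ?_⟩
    rw [h, Nat.add_sub_cancel' (by omega), hcm]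
  exact ⟨key fun j => (h j).symm, key h⟩

theorem maxInfRec_iff_of_shift {c c' : ℕ → ℕ} {k l : ℕ} (h : ∀ j, c (k + j) = c' (l + j))
    (x : ℕ) : MaxInfRec c x ↔ MaxInfRec c' x := by
  simp only [MaxInfRec, infOften_iff_of_shift h]

theorem parityAccepting_iff_of_shift {c c' : ℕ → ℕ} {k l : ℕ}
    (h : ∀ j, c (k + j) = c' (l + j)) : ParityAccepting c ↔ ParityAccepting c' := by
  simp only [ParityAccepting, maxInfRec_iff_of_shift h]

theorem MaxInfRec.unique {c : ℕ → ℕ} {x y : ℕ} (hx : MaxInfRec c x) (hy : MaxInfRec c y) :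
    x = y :=
  le_antisymm (hy.2 x hx.1) (hx.2 y hy.1)

theorem maxInfRec_mod (P : ℕ → ℕ) {m : ℕ} (hm : 0 < m) :
    MaxInfRec (fun i => P (i % m)) ((Finset.range m).sup P) := by
  obtain ⟨j, hj, hjsup⟩ :=
    Finset.exists_mem_eq_sup (Finset.range m) (Finset.nonempty_range_iff.mpr hm.ne') P
  rw [Finset.mem_range] at hj
  refine ⟨fun n => ⟨j + n * m, by nlinarith, ?_⟩, fun w hw => ?_⟩
  · simp [Nat.mod_eq_of_lt hj, hjsup]
  · obtain ⟨i, -, rfl⟩ := hw 0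
    exact Finset.le_sup (Finset.mem_range.mpr (Nat.mod_lt i hm))

namespace Collapse

variable (u v : List Bool)

def step (s : List Bool) (d : Bool) : List Bool :=
  if s ++ [d] = u ++ v then u else s ++ [d]

def collapse (w : List Bool) : List Bool :=
  w.foldl (step u v) []

variable {u v}

theorem collapse_append_singleton (w : List Bool) (d : Bool) :
    collapse u v (w ++ [d]) = step u v (collapse u v w) d := by
  simp [collapse]

theorem collapse_of_length_lt {w : List Bool} (hw : w.length < u.length + v.length) :
    collapse u v w = w := by
  induction w using List.reverseRecOn with
  | nil => rfl
  | append_singleton w d ih =>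
    have hne : w ++ [d] ≠ u ++ v := fun h => by simp [h] at hw
    simp only [List.length_append, List.length_singleton] at hw
    rw [collapse_append_singleton, ih (by omega), step, if_neg hne]

theorem step_of_not_prefix {s : List Bool} (hs : ¬ s <+: u ++ v) (d : Bool) :
    step u v s d = s ++ [d] :=
  if_neg fun h : s ++ [d] = u ++ v => hs (h ▸ List.prefix_append s [d])

theorem not_prefix_step {s : List Bool} (hs : ¬ s <+: u ++ v) (d : Bool) :
    ¬ step u v s d <+: u ++ v := by
  rw [step_of_not_prefix hs]
  exact fun h => hs ((List.prefix_append s [d]).trans h)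

theorem prefix_of_step_prefix {s : List Bool} {d : Bool} (h : step u v s d <+: u ++ v) :
    s ++ [d] <+: u ++ v := by
  unfold step at h
  split_ifs at h with hsd
  · exact hsd ▸ List.prefix_refl _
  · exact h

theorem min_le_length_step (s : List Bool) (d : Bool) :
    min (s.length + 1) u.length ≤ (step u v s d).length := by
  unfold step
  split_ifs <;> simp

theorem step_loop (hv : v ≠ []) (k : ℕ) :
    step u v (u ++ v.take (k % v.length)) (v.getD (k % v.length) false) =
      u ++ v.take ((k + 1) % v.length) := by
  have hm : 0 < v.length := List.length_pos_iff.mpr hv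
  have hj := Nat.mod_lt k hm
  have htake : u ++ v.take (k % v.length) ++ [v.getD (k % v.length) false] =
      u ++ v.take (k % v.length + 1) := by
    rw [List.append_assoc, List.take_add_one, List.getD_eq_getElem _ _ hj,
      List.getElem?_eq_getElem hj]
    rfl
  rw [step, htake, ← Nat.mod_add_mod]
  rcases Nat.lt_or_ge (k % v.length + 1) v.length with hlt | hge
  · have hne : u ++ v.take (k % v.length + 1) ≠ u ++ v := fun h => by
      have := congrArg List.length h
      simp at this
      omega
    rw [if_neg hne, Nat.mod_eq_of_lt hlt]
  · have heq : k % v.length + 1 = v.length := by omega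
    simp [heq]

theorem eq_getD_of_append_prefix {j : ℕ} {d : Bool} (h : u ++ v.take j ++ [d] <+: u ++ v) :
    d = v.getD j false := by
  rw [List.append_assoc, List.prefix_append_right_inj] at h
  have hlen := h.length_le
  simp only [List.length_append, List.length_take, List.length_singleton] at hlen
  have hj : j < v.length := by omega
  have := h.getElem (i := j) (by simp; omega)
  simp [Nat.min_eq_left hj.le] at this
  simp [this, hj]

end Collapse

section Runs

open Collapse

variable {A : Type} (M : NPA A) {u v : List Bool}

def loopPrio (ρ : List Bool → M.Q × A × M.Q × M.Q) (u v : List Bool) (j : ℕ) : ℕ :=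
  M.prio (ρ (u ++ v.take j)) (v.getD j false)

def lasso (u v : List Bool) : ℕ → Bool :=
  prependBranch u fun i => v.getD (i % v.length) false

variable {M}

theorem IsRun.comp_collapse {t : List Bool → A} {ρ : List Bool → M.Q × A × M.Q × M.Q}
    (hR : IsRun M t ρ) (hfix : ρ u = ρ (u ++ v)) :
    IsRun M (t ∘ collapse u v) (ρ ∘ collapse u v) := by
  refine ⟨hR.1, fun w => ⟨(hR.2 _).1, (hR.2 _).2.1, fun d => ?_⟩⟩
  rw [Function.comp_apply, Function.comp_apply, collapse_append_singleton, step]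
  by_cases h : collapse u v w ++ [d] = u ++ v
  · rw [if_pos h, hfix, ← h]
    exact (hR.2 _).2.2 d
  · rw [if_neg h]
    exact (hR.2 _).2.2 d

theorem collapse_pref_add_of_loop (hv : v ≠ []) {b : ℕ → Bool} {n j₀ : ℕ}
    (hW : collapse u v (pref b n) = u ++ v.take (j₀ % v.length)) (i : ℕ)
    (hb : ∀ k < i, b (n + k) = v.getD ((j₀ + k) % v.length) false) :
    collapse u v (pref b (n + i)) = u ++ v.take ((j₀ + i) % v.length) := by
  induction i with
  | zero => exact hW
  | succ i ih =>
    rw [← Nat.add_assoc, pref_succ, collapse_append_singleton,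
      ih fun k hk => hb k (by omega), hb i (by omega), ← Nat.add_assoc, step_loop hv]

theorem maxInfRec_branchPrio_of_loop (hv : v ≠ []) {ρ : List Bool → M.Q × A × M.Q × M.Q}
    {b : ℕ → Bool} {n j₀ : ℕ} (hW : collapse u v (pref b n) = u ++ v.take (j₀ % v.length))
    (hb : ∀ i, b (n + i) = v.getD ((j₀ + i) % v.length) false) :
    MaxInfRec (BranchPrio M (ρ ∘ collapse u v) b)
      ((Finset.range v.length).sup (loopPrio M ρ u v)) := by
  refine (maxInfRec_iff_of_shift (k := n) (l := j₀) (fun i => ?_) _).2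
    (maxInfRec_mod _ (List.length_pos_iff.mpr hv))
  simp only [BranchPrio, Function.comp_apply, loopPrio,
    collapse_pref_add_of_loop hv hW i fun k _ => hb k, hb i]

theorem maxInfRec_branchPrio_lasso (hv : v ≠ []) (ρ : List Bool → M.Q × A × M.Q × M.Q) :
    MaxInfRec (BranchPrio M (ρ ∘ collapse u v) (lasso u v))
      ((Finset.range v.length).sup (loopPrio M ρ u v)) := by
  have hu : pref (lasso u v) u.length = u := by
    have := pref_prependBranch u (fun i => v.getD (i % v.length) false) 0
    rwa [Nat.add_zero, show pref _ 0 = [] from rfl, List.append_nil] at this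
  refine maxInfRec_branchPrio_of_loop hv (n := u.length) (j₀ := 0) ?_ fun i => ?_
  · rw [hu, collapse_of_length_lt (by simpa using List.length_pos_iff.mpr hv)]
    simp
  · simp [lasso, prependBranch_length_add]

theorem maxInfRec_branchPrio_of_forall_prefix (hv : v ≠ [])
    {ρ : List Bool → M.Q × A × M.Q × M.Q} {b : ℕ → Bool}
    (hloop : ∀ n, collapse u v (pref b n) <+: u ++ v) :
    MaxInfRec (BranchPrio M (ρ ∘ collapse u v) b)
      ((Finset.range v.length).sup (loopPrio M ρ u v)) := by
  set W := fun n => collapse u v (pref b n) with hWdef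
  have hstep : ∀ n, W (n + 1) = step u v (W n) (b n) := fun n => by
    simp only [hWdef, pref_succ, collapse_append_singleton]
  replace hloop : ∀ n, W n <+: u ++ v := hloop
  have hnext : ∀ n, W n ++ [b n] <+: u ++ v := fun n =>
    prefix_of_step_prefix (hstep n ▸ hloop (n + 1))
  have hlen : ∀ n, min n u.length ≤ (W n).length := fun n => by
    induction n with
    | zero => simp
    | succ n ih => exact (hstep n ▸ min_le_length_step (W n) (b n)).trans' (by omega)
  obtain ⟨j₀, hW₀⟩ : ∃ j₀, W u.length = u ++ v.take (j₀ % v.length) := by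
    have hlong : u.length ≤ (W u.length).length := by simpa using hlen u.length
    have hshort := (hnext u.length).length_le
    simp only [List.length_append, List.length_singleton] at hshort
    have hW := List.prefix_iff_eq_take.mp (hloop u.length)
    rw [List.take_append, List.take_of_length_le hlong] at hW
    exact ⟨(W u.length).length - u.length, by rwa [Nat.mod_eq_of_lt (by omega)]⟩
  have hb : ∀ i, b (u.length + i) = v.getD ((j₀ + i) % v.length) false := fun i => by
    induction i using Nat.strong_induction_on with
    | _ i ih =>
      have hWi : W (u.length + i) = _ := collapse_pref_add_of_loop hv hW₀ i ih
      exact eq_getD_of_append_prefix (hWi ▸ hnext (u.length + i))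
  exact maxInfRec_branchPrio_of_loop hv hW₀ hb

theorem parityAccepting_branchPrio_of_not_prefix {ρ : List Bool → M.Q × A × M.Q × M.Q}
    (hacc : AcceptingRun M ρ) {b : ℕ → Bool} {N : ℕ}
    (hN : ¬ collapse u v (pref b N) <+: u ++ v) :
    ParityAccepting (BranchPrio M (ρ ∘ collapse u v) b) := by
  set W := fun n => collapse u v (pref b n) with hWdef
  have hstep : ∀ n, W (n + 1) = step u v (W n) (b n) := fun n => by
    simp only [hWdef, pref_succ, collapse_append_singleton]
  have hout : ∀ j, ¬ W (N + j) <+: u ++ v := fun j => by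
    induction j with
    | zero => exact hN
    | succ j ih => exact hstep (N + j) ▸ not_prefix_step ih (b (N + j))
  have hW : ∀ j, W (N + j) = W N ++ pref (fun i => b (N + i)) j := fun j => by
    induction j with
    | zero => exact (List.append_nil _).symm
    | succ j ih =>
      rw [← Nat.add_assoc, hstep, step_of_not_prefix (hout j), ih, pref_succ, List.append_assoc]
  refine (parityAccepting_iff_of_shift (k := N) (l := (W N).length)
    (c' := BranchPrio M ρ (prependBranch (W N) fun i => b (N + i))) fun j => ?_).2 (hacc _)
  simp only [BranchPrio, Function.comp_apply, pref_prependBranch, prependBranch_length_add]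
  rw [← hW]

theorem AcceptingRun.comp_collapse {ρ : List Bool → M.Q × A × M.Q × M.Q}
    (hacc : AcceptingRun M ρ) (hv : v ≠ [])
    (heven : Even ((Finset.range v.length).sup (loopPrio M ρ u v))) :
    AcceptingRun M (ρ ∘ collapse u v) := by
  intro b
  by_cases h : ∃ N, ¬ collapse u v (pref b N) <+: u ++ v
  · obtain ⟨N, hN⟩ := h
    exact parityAccepting_branchPrio_of_not_prefix hacc hN
  · push Not at h
    exact ⟨_, maxInfRec_branchPrio_of_forall_prefix hv h, heven⟩

end Runs

theorem stmt8_general (A : Type) (M B : NPA A) (t : List Bool → A)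
    (ρA : List Bool → M.Q × A × M.Q × M.Q)
    (ρB : List Bool → B.Q × A × B.Q × B.Q)
    (hRA : IsRun M t ρA)
    (hRB : IsRun B t ρB) (haccB : AcceptingRun B ρB)
    (g : M.Q × (B.Q × A × B.Q × B.Q) → M.Q × A × M.Q × M.Q)
    (hpres : PreservesAcceptance M B g)
    (hguided : Guided g ρB ρA)
    (u v : List Bool) (hv : v ≠ [])
    (hA : ρA u = ρA (u ++ v)) (hB : ρB u = ρB (u ++ v))
    (hBeven : Even ((Finset.range v.length).sup
      (fun k => B.prio (ρB (u ++ v.take k)) (v.getD k false)))) :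
    Even ((Finset.range v.length).sup
      (fun k => M.prio (ρA (u ++ v.take k)) (v.getD k false))) := by
  have haccA : AcceptingRun M (ρA ∘ Collapse.collapse u v) :=
    hpres _ _ _ (hRB.comp_collapse hB) (haccB.comp_collapse hv hBeven) (hRA.comp_collapse hA)
      fun w => hguided (Collapse.collapse u v w)
  obtain ⟨V, hV, hVeven⟩ := haccA (lasso u v)
  rwa [hV.unique (maxInfRec_branchPrio_lasso hv ρA)] at hVeven

/-- Lemma 2 of the paper: for accepting runs `ρA` guided by `ρB`
via an acceptance-preserving guiding function, if `ρA(u) = ρA(u·v)` and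
`ρB(u) = ρB(u·v)` and the greatest priority of `ρB` on the segment from `u`
to `u·v` is even, then so is the greatest priority of `ρA` on that segment. -/
theorem stmt8 (A : Type) (M B : NPA A) (t : List Bool → A)
    (ρA : List Bool → M.Q × A × M.Q × M.Q)
    (ρB : List Bool → B.Q × A × B.Q × B.Q)
    (hRA : IsRun M t ρA) (haccA : AcceptingRun M ρA)
    (hRB : IsRun B t ρB) (haccB : AcceptingRun B ρB)
    (g : M.Q × (B.Q × A × B.Q × B.Q) → M.Q × A × M.Q × M.Q)
    (hg : GuidingCompat M B g) (hpres : PreservesAcceptance M B g)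
    (hguided : Guided g ρB ρA)
    (u v : List Bool) (hv : v ≠ [])
    (hA : ρA u = ρA (u ++ v)) (hB : ρB u = ρB (u ++ v))
    (hBeven : Even ((Finset.range v.length).sup
      (fun k => B.prio (ρB (u ++ v.take k)) (v.getD k false)))) :
    Even ((Finset.range v.length).sup
      (fun k => M.prio (ρA (u ++ v.take k)) (v.getD k false))) :=
  stmt8_general A M B t ρA ρB hRA hRB haccB g hpres hguided u v hv hA hB hBeven
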